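/- Let f:D→ℝ be strongly tree-submodular and K = max_i |D_i|. If x^0, x^1, …, x^m is a sequence in D such that for each t, x^{t+1} is a minimizer of f over INWARD(x^t) and f(x^{t+1}) < f(x^t), then m ≤ K. (The inward steepest-descent phase performs at most K cost-decreasing steps.) -/

import Mathlib

/-- A finite rooted tree on vertex set `V`, encoded by its root, the parent function
(with `parent root = root`) and the depth function (distance to the root). -/
structure RTree (V : Type*) where
  root : V
  parent : V → V
  depth : V → ℕ
  parent_root : parent root = root
  depth_root : depth root = 0
  depth_parent : ∀ v, v ≠ root → depth (parent v) + 1 = depth v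

namespace RTree

variable {V : Type*} (T : RTree V)

/-- `a ⪯ b` : `a` is an ancestor of `b`, i.e. `a` lies on the path from `b` to the root. -/
def anc (a b : V) : Prop := ∃ k : ℕ, T.parent^[k] b = a

theorem iterate_depth_aux : ∀ (n : ℕ) (v : V), T.depth v = n → T.parent^[n] v = T.root := by
  intro n
  induction n with
  | zero =>
    intro v hn
    by_cases hv : v = T.root
    · simp [hv]
    · have := T.depth_parent v hv; omega
  | succ n ih =>
    intro v hn
    have hv : v ≠ T.root := by
      intro h; rw [h, T.depth_root] at hn; omega
    have h := T.depth_parent v hv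
    rw [Function.iterate_succ_apply]
    exact ih (T.parent v) (by omega)

theorem iterate_depth (v : V) : T.parent^[T.depth v] v = T.root :=
  T.iterate_depth_aux (T.depth v) v rfl

theorem anc_root (b : V) : T.anc T.root b := ⟨T.depth b, T.iterate_depth b⟩

theorem exists_lcaIndex (a b : V) : ∃ k : ℕ, T.anc (T.parent^[k] a) b :=
  ⟨T.depth a, by rw [T.iterate_depth a]; exact T.anc_root b⟩

open Classical in
/-- The highest common ancestor of `a` and `b` : the deepest vertex that is an ancestor
of both `a` and `b` (i.e. the unique vertex of the path `P[a→b]` that is an ancestor of both). -/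
noncomputable def lca (a b : V) : V := T.parent^[Nat.find (T.exists_lcaIndex a b)] a

/-- `ρ(a,b)` : the number of edges of the unique path `P[a→b]` from `a` to `b`. -/
noncomputable def dist (a b : V) : ℕ :=
  (T.depth a - T.depth (T.lca a b)) + (T.depth b - T.depth (T.lca a b))

open Classical in
/-- `P[a→b, d]` : the `d`-th vertex of the path from `a` to `b` (first the ascending part
from `a` to the highest common ancestor, then the descending part towards `b`);
by convention it equals `b` for `d > ρ(a,b)`. -/
noncomputable def pathVertex (a b : V) (d : ℕ) : V :=
  if T.dist a b ≤ d then b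
  else if d ≤ T.depth a - T.depth (T.lca a b) then T.parent^[d] a
  else T.parent^[T.dist a b - d] b

open Classical in
/-- `a ⊓ b` : the member of `{P[a→b,⌊ρ(a,b)/2⌋], P[a→b,⌈ρ(a,b)/2⌉]}` that is an
ancestor of the other one. -/
noncomputable def cap (a b : V) : V :=
  if T.anc (T.pathVertex a b (T.dist a b / 2)) (T.pathVertex a b ((T.dist a b + 1) / 2))
  then T.pathVertex a b (T.dist a b / 2)
  else T.pathVertex a b ((T.dist a b + 1) / 2)

open Classical in
/-- `a ⊔ b` : the member of `{P[a→b,⌊ρ(a,b)/2⌋], P[a→b,⌈ρ(a,b)/2⌉]}` that is a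
descendant of the other one. -/
noncomputable def cup (a b : V) : V :=
  if T.anc (T.pathVertex a b (T.dist a b / 2)) (T.pathVertex a b ((T.dist a b + 1) / 2))
  then T.pathVertex a b ((T.dist a b + 1) / 2)
  else T.pathVertex a b (T.dist a b / 2)

/-- `a ∧ b` : the highest common ancestor of `a` and `b`. -/
noncomputable def meet (a b : V) : V := T.lca a b

/-- `a ∨ b` : the unique vertex of `P[a→b]` with `ρ(a, a∨b) = ρ(a∧b, b)`. -/
noncomputable def join (a b : V) : V :=
  T.pathVertex a b (T.depth b - T.depth (T.lca a b))

/-- `a ↑^d b = P[a→b,d] ∧ b`. -/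
noncomputable def up (d : ℕ) (a b : V) : V := T.meet (T.pathVertex a b d) b

/-- `a ↓_d b = P[a→b, ρ(a ↑^d b, b)]`. -/
noncomputable def down (d : ℕ) (a b : V) : V :=
  T.pathVertex a b (T.dist (T.up d a b) b)

end RTree

section Product

variable {ι : Type*} {V : ι → Type*}

/-- `f` is strongly tree-submodular w.r.t. the trees `T i`:
`f(x) + f(y) ≥ f(x ⊓ y) + f(x ⊔ y)`, the operations acting componentwise. -/
def StronglyTreeSubmodular (T : ∀ i, RTree (V i)) (f : (∀ i, V i) → ℝ) : Prop :=
  ∀ x y : ∀ i, V i,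
    f (fun i => (T i).cap (x i) (y i)) + f (fun i => (T i).cup (x i) (y i)) ≤ f x + f y

/-- `INWARD(x) = { y ∈ NEIB(x) : y ⪯ x }`, where `NEIB(x) = {y : max_i ρ(x_i,y_i) ≤ 1}`. -/
def inward (T : ∀ i, RTree (V i)) (x : ∀ i, V i) : Set (∀ i, V i) :=
  {y | (∀ i, (T i).dist (x i) (y i) ≤ 1) ∧ ∀ i, (T i).anc (y i) (x i)}

/-- `OUTWARD(x) = { y ∈ NEIB(x) : x ⪯ y }`. -/
def outward (T : ∀ i, RTree (V i)) (x : ∀ i, V i) : Set (∀ i, V i) :=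
  {y | (∀ i, (T i).dist (x i) (y i) ≤ 1) ∧ ∀ i, (T i).anc (x i) (y i)}

end Product

/-!
If the last step of the inward phase still decreases `f`, some coordinate has moved to its
parent at every step, so its depth dropped by `m`. To find it, let `N s` be the set of
coordinates that move at every step from `s` on, and compare `x s` with `e s`, the labeling
`x s` with the coordinates in `N s` lifted. Submodularity applied to `x s` and `e (s + 1)`
yields `e s` and a point of `INWARD(x s)`; since `x (s + 1)` is optimal there,
`f (x s) - f (e s)` does not increase. It vanishes at `s = 0` if `N 0 = ∅`, while at
`s = m - 1` it equals `f (x (m - 1)) - f (x m) > 0`.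
-/

namespace RTree

variable {V : Type*} (T : RTree V)

theorem depth_iterate {l : ℕ} {v : V} (h : l ≤ T.depth v) :
    T.depth (T.parent^[l] v) = T.depth v - l := by
  induction l generalizing v with
  | zero => simp
  | succ n ih =>
    have hv : v ≠ T.root := by
      rintro rfl
      rw [T.depth_root] at h
      omega
    have hd := T.depth_parent v hv
    rw [Function.iterate_succ_apply, ih (by omega)]
    omega

theorem depth_lt_card [Fintype V] (v : V) : T.depth v < Fintype.card V := by
  have hinj : Function.Injective fun l : Fin (T.depth v + 1) => T.parent^[l] v := by
    intro l₁ l₂ hl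
    have := congrArg T.depth hl
    simp only at this
    rw [T.depth_iterate (by omega), T.depth_iterate (by omega)] at this
    omega
  simpa using Fintype.card_le_of_injective _ hinj

theorem depth_add_eq_of_parent_chain {a : ℕ → V} {m : ℕ}
    (h : ∀ r < m, a (r + 1) = T.parent (a r) ∧ a (r + 1) ≠ a r) :
    T.depth (a m) + m = T.depth (a 0) := by
  induction m with
  | zero => rfl
  | succ m ih =>
    obtain ⟨hpar, hne⟩ := h m m.lt_succ_self
    have hroot : a m ≠ T.root := fun hr => hne (by rw [hpar, hr, T.parent_root])
    have := T.depth_parent _ hroot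
    rw [← ih fun r hr => h r (by omega), hpar]
    omega

theorem ne_root_of_parent_ne {a : V} (h : T.parent a ≠ a) : a ≠ T.root := by
  rintro rfl
  exact h T.parent_root

theorem anc_refl (a : V) : T.anc a a := ⟨0, rfl⟩

theorem anc_parent (a : V) : T.anc (T.parent a) a := ⟨1, rfl⟩

theorem anc_depth_le {a b : V} (h : T.anc a b) : T.depth a ≤ T.depth b := by
  obtain ⟨l, rfl⟩ := h
  induction l with
  | zero => exact le_rfl
  | succ n ih =>
    rw [Function.iterate_succ_apply']
    by_cases hr : T.parent^[n] b = T.root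
    · rw [hr, T.parent_root, ← hr]
      exact ih
    · have := T.depth_parent _ hr
      omega

theorem exists_iterate_eq_of_anc {a b : V} (h : T.anc b a) :
    ∃ j ≤ T.depth a, T.parent^[j] a = b := by
  obtain ⟨l, rfl⟩ := h
  rcases le_total l (T.depth a) with hl | hl
  · exact ⟨l, hl, rfl⟩
  · refine ⟨T.depth a, le_rfl, ?_⟩
    obtain ⟨c, rfl⟩ := Nat.exists_eq_add_of_le hl
    rw [add_comm, Function.iterate_add_apply, T.iterate_depth]
    exact (Function.iterate_fixed T.parent_root c).symm

theorem lca_iterate {j : ℕ} {a : V} (h : j ≤ T.depth a) :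
    T.lca a (T.parent^[j] a) = T.parent^[j] a := by
  classical
  have hfind : Nat.find (T.exists_lcaIndex a (T.parent^[j] a)) = j := by
    rw [Nat.find_eq_iff]
    refine ⟨T.anc_refl _, fun k hk hanc => ?_⟩
    have := T.anc_depth_le hanc
    rw [T.depth_iterate (by omega), T.depth_iterate h] at this
    omega
  rw [lca, hfind]

theorem dist_iterate {j : ℕ} {a : V} (h : j ≤ T.depth a) :
    T.dist a (T.parent^[j] a) = j := by
  rw [dist, T.lca_iterate h, T.depth_iterate h]
  omega

theorem pathVertex_iterate {j : ℕ} {a : V} (h : j ≤ T.depth a) (d : ℕ) :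
    T.pathVertex a (T.parent^[j] a) d = T.parent^[min d j] a := by
  rw [pathVertex, T.dist_iterate h, T.lca_iterate h, T.depth_iterate h]
  rcases le_or_gt j d with hjd | hjd
  · rw [if_pos hjd, min_eq_right hjd]
  · rw [if_neg (by omega), if_pos (by omega), min_eq_left hjd.le]

theorem anc_iterate_half_iff {j : ℕ} {a : V} (h : j ≤ T.depth a) :
    T.anc (T.parent^[j / 2] a) (T.parent^[(j + 1) / 2] a) ↔ Even j := by
  constructor
  · intro hanc
    have := T.anc_depth_le hanc
    rw [T.depth_iterate (by omega), T.depth_iterate (by omega)] at this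
    rw [Nat.even_iff]
    omega
  · rintro ⟨c, rfl⟩
    rw [show (c + c + 1) / 2 = (c + c) / 2 by omega]
    exact T.anc_refl _

theorem cap_iterate {j : ℕ} {a : V} (h : j ≤ T.depth a) :
    T.cap a (T.parent^[j] a) = T.parent^[(j + 1) / 2] a := by
  rw [cap, T.dist_iterate h, T.pathVertex_iterate h, T.pathVertex_iterate h,
    min_eq_left (by omega), min_eq_left (by omega), T.anc_iterate_half_iff h]
  split_ifs with he
  · obtain ⟨c, rfl⟩ := he
    congr 1
    omega
  · rfl

theorem cup_iterate {j : ℕ} {a : V} (h : j ≤ T.depth a) :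
    T.cup a (T.parent^[j] a) = T.parent^[j / 2] a := by
  rw [cup, T.dist_iterate h, T.pathVertex_iterate h, T.pathVertex_iterate h,
    min_eq_left (by omega), min_eq_left (by omega), T.anc_iterate_half_iff h]
  split_ifs with he
  · obtain ⟨c, rfl⟩ := he
    congr 1
    omega
  · rfl

theorem cap_self (a : V) : T.cap a a = a :=
  T.cap_iterate (j := 0) (Nat.zero_le _)

theorem cup_self (a : V) : T.cup a a = a :=
  T.cup_iterate (j := 0) (Nat.zero_le _)

theorem one_le_depth {a : V} (h : a ≠ T.root) : 1 ≤ T.depth a := by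
  have := T.depth_parent a h
  omega

theorem cap_parent {a : V} (h : a ≠ T.root) : T.cap a (T.parent a) = T.parent a :=
  T.cap_iterate (j := 1) (T.one_le_depth h)

theorem cup_parent {a : V} (h : a ≠ T.root) : T.cup a (T.parent a) = a :=
  T.cup_iterate (j := 1) (T.one_le_depth h)

theorem two_le_depth {a : V} (h : T.parent a ≠ T.root) : 2 ≤ T.depth a := by
  have ha : a ≠ T.root := by
    rintro rfl
    exact h T.parent_root
  have := T.depth_parent a ha
  have := T.depth_parent _ h
  omega

theorem cap_parent_parent {a : V} (h : T.parent a ≠ T.root) :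
    T.cap a (T.parent (T.parent a)) = T.parent a :=
  T.cap_iterate (j := 2) (T.two_le_depth h)

theorem cup_parent_parent {a : V} (h : T.parent a ≠ T.root) :
    T.cup a (T.parent (T.parent a)) = T.parent a :=
  T.cup_iterate (j := 2) (T.two_le_depth h)

theorem dist_self (a : V) : T.dist a a = 0 :=
  T.dist_iterate (j := 0) (Nat.zero_le _)

theorem dist_parent_le (a : V) : T.dist a (T.parent a) ≤ 1 := by
  by_cases h : a = T.root
  · rw [h, T.parent_root, T.dist_self]
    exact zero_le_one
  · exact (T.dist_iterate (j := 1) (T.one_le_depth h)).le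

theorem eq_parent_of_anc_of_dist_le_one {a b : V} (hanc : T.anc b a) (hd : T.dist a b ≤ 1)
    (hne : b ≠ a) : b = T.parent a := by
  obtain ⟨j, hj, rfl⟩ := T.exists_iterate_eq_of_anc hanc
  rw [T.dist_iterate hj] at hd
  interval_cases j
  · exact absurd rfl hne
  · rfl

end RTree

section Descent

variable {ι : Type*} {V : ι → Type*} (T : ∀ i, RTree (V i))

open Classical in
noncomputable def parentOn (S : Set ι) (x : ∀ i, V i) : ∀ i, V i :=
  S.piecewise (fun i => (T i).parent (x i)) x

open Classical in
theorem parentOn_apply_of_mem {S : Set ι} {x : ∀ i, V i} {i : ι} (hi : i ∈ S) :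
    parentOn T S x i = (T i).parent (x i) :=
  Set.piecewise_eq_of_mem _ _ _ hi

open Classical in
theorem parentOn_apply_of_notMem {S : Set ι} {x : ∀ i, V i} {i : ι} (hi : i ∉ S) :
    parentOn T S x i = x i :=
  Set.piecewise_eq_of_notMem _ _ _ hi

theorem parentOn_empty (x : ∀ i, V i) : parentOn T ∅ x = x :=
  funext fun _ => parentOn_apply_of_notMem T (Set.notMem_empty _)

theorem parentOn_mem_inward (S : Set ι) (x : ∀ i, V i) : parentOn T S x ∈ inward T x := by
  refine ⟨fun i => ?_, fun i => ?_⟩ <;> by_cases hi : i ∈ S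
  · rw [parentOn_apply_of_mem T hi]
    exact (T i).dist_parent_le _
  · rw [parentOn_apply_of_notMem T hi, (T i).dist_self]
    exact zero_le_one
  · rw [parentOn_apply_of_mem T hi]
    exact (T i).anc_parent _
  · rw [parentOn_apply_of_notMem T hi]
    exact (T i).anc_refl _

theorem apply_eq_parent_of_mem_inward {x y : ∀ i, V i} (hy : y ∈ inward T x) {i : ι}
    (hi : y i ≠ x i) : y i = (T i).parent (x i) :=
  (T i).eq_parent_of_anc_of_dist_le_one (hy.2 i) (hy.1 i) hi

theorem eq_parentOn_of_mem_inward {x y : ∀ i, V i} (hy : y ∈ inward T x) :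
    y = parentOn T {i | y i ≠ x i} x := by
  funext i
  by_cases hi : y i ≠ x i
  · rw [parentOn_apply_of_mem T hi]
    exact apply_eq_parent_of_mem_inward T hy hi
  · rw [parentOn_apply_of_notMem T hi]
    exact not_not.mp hi

theorem cap_parentOn_parentOn {A B : Set ι} {x : ∀ i, V i} (hA : ∀ i ∈ A, x i ≠ (T i).root)
    (hB : ∀ i ∈ B, parentOn T A x i ≠ (T i).root) :
    (fun i => (T i).cap (x i) (parentOn T B (parentOn T A x) i)) = parentOn T (A ∪ B) x := by
  funext i
  by_cases hiA : i ∈ A <;> by_cases hiB : i ∈ B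
  · have := hB i hiB
    rw [parentOn_apply_of_mem T hiA] at this
    simp only [parentOn_apply_of_mem T hiA, parentOn_apply_of_mem T hiB,
      parentOn_apply_of_mem T (Set.mem_union_left B hiA), (T i).cap_parent_parent this]
  · simp only [parentOn_apply_of_mem T hiA, parentOn_apply_of_notMem T hiB,
      parentOn_apply_of_mem T (Set.mem_union_left B hiA), (T i).cap_parent (hA i hiA)]
  · have := hB i hiB
    rw [parentOn_apply_of_notMem T hiA] at this
    simp only [parentOn_apply_of_notMem T hiA, parentOn_apply_of_mem T hiB,
      parentOn_apply_of_mem T (Set.mem_union_right A hiB), (T i).cap_parent this]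
  · have : i ∉ A ∪ B := fun h => h.elim hiA hiB
    simp only [parentOn_apply_of_notMem T hiA, parentOn_apply_of_notMem T hiB,
      parentOn_apply_of_notMem T this, (T i).cap_self]

theorem cup_parentOn_parentOn {A B : Set ι} {x : ∀ i, V i} (hA : ∀ i ∈ A, x i ≠ (T i).root)
    (hB : ∀ i ∈ B, parentOn T A x i ≠ (T i).root) :
    (fun i => (T i).cup (x i) (parentOn T B (parentOn T A x) i)) = parentOn T (A ∩ B) x := by
  funext i
  by_cases hiA : i ∈ A <;> by_cases hiB : i ∈ B
  · have := hB i hiB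
    rw [parentOn_apply_of_mem T hiA] at this
    simp only [parentOn_apply_of_mem T hiA, parentOn_apply_of_mem T hiB,
      parentOn_apply_of_mem T (Set.mem_inter hiA hiB), (T i).cup_parent_parent this]
  · have : i ∉ A ∩ B := fun h => hiB h.2
    simp only [parentOn_apply_of_mem T hiA, parentOn_apply_of_notMem T hiB,
      parentOn_apply_of_notMem T this, (T i).cup_parent (hA i hiA)]
  · have hr := hB i hiB
    rw [parentOn_apply_of_notMem T hiA] at hr
    have : i ∉ A ∩ B := fun h => hiA h.1
    simp only [parentOn_apply_of_notMem T hiA, parentOn_apply_of_mem T hiB,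
      parentOn_apply_of_notMem T this, (T i).cup_parent hr]
  · have : i ∉ A ∩ B := fun h => hiA h.1
    simp only [parentOn_apply_of_notMem T hiA, parentOn_apply_of_notMem T hiB,
      parentOn_apply_of_notMem T this, (T i).cup_self]

variable {T} {f : (∀ i, V i) → ℝ}

theorem StronglyTreeSubmodular.sub_le_of_isMinOn_inward (hf : StronglyTreeSubmodular T f)
    {A B : Set ι} {x : ∀ i, V i} (hA : ∀ i ∈ A, x i ≠ (T i).root)
    (hB : ∀ i ∈ B, parentOn T A x i ≠ (T i).root)
    (hmin : ∀ y ∈ inward T x, f (parentOn T A x) ≤ f y) :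
    f (parentOn T A x) - f (parentOn T B (parentOn T A x)) ≤
      f x - f (parentOn T (A ∩ B) x) := by
  have hsub := hf x (parentOn T B (parentOn T A x))
  rw [cap_parentOn_parentOn T hA hB, cup_parentOn_parentOn T hA hB] at hsub
  have := hmin _ (parentOn_mem_inward T (A ∪ B) x)
  linarith

theorem StronglyTreeSubmodular.exists_forall_apply_succ_ne (hf : StronglyTreeSubmodular T f)
    {m : ℕ} (hm : 0 < m) {x : ℕ → ∀ i, V i} (hin : ∀ t < m, x (t + 1) ∈ inward T (x t))
    (hmin : ∀ t < m, ∀ y ∈ inward T (x t), f (x (t + 1)) ≤ f y)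
    (hlast : f (x m) < f (x (m - 1))) :
    ∃ i, ∀ t < m, x (t + 1) i ≠ x t i := by
  set M : ℕ → Set ι := fun t => {i | x (t + 1) i ≠ x t i}
  set N : ℕ → Set ι := fun s => {i | ∀ t, s ≤ t → t < m → i ∈ M t}
  have hx : ∀ t < m, x (t + 1) = parentOn T (M t) (x t) := fun t ht =>
    eq_parentOn_of_mem_inward T (hin t ht)
  have hroot : ∀ t < m, ∀ i ∈ M t, x t i ≠ (T i).root := fun t ht i hi =>
    (T i).ne_root_of_parent_ne (apply_eq_parent_of_mem_inward T (hin t ht) hi ▸ hi)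
  have hN : ∀ s < m, M s ∩ N (s + 1) = N s := by
    intro s hs
    ext i
    refine ⟨fun ⟨hi, hN⟩ t hst htm => ?_,
      fun hN => ⟨hN s le_rfl hs, fun t hst => hN t (by omega)⟩⟩
    rcases hst.eq_or_lt with rfl | hst
    exacts [hi, hN t hst htm]
  set d : ℕ → ℝ := fun s => f (x s) - f (parentOn T (N s) (x s))
  have hd : ∀ s, s + 2 ≤ m → d (s + 1) ≤ d s := by
    intro s hs
    have hB : ∀ i ∈ N (s + 1), parentOn T (M s) (x s) i ≠ (T i).root := by
      rw [← hx s (by omega)]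
      exact fun i hi => hroot (s + 1) (by omega) i (hi (s + 1) le_rfl (by omega))
    have := hf.sub_le_of_isMinOn_inward (hroot s (by omega)) hB
      (by rw [← hx s (by omega)]; exact hmin s (by omega))
    rwa [← hx s (by omega), hN s (by omega)] at this
  have hchain : ∀ s, s + 1 ≤ m → d s ≤ d 0 := by
    intro s
    induction s with
    | zero => exact fun _ => le_rfl
    | succ s ih => exact fun hs => (hd s hs).trans (ih (by omega))
  have hend : parentOn T (N (m - 1)) (x (m - 1)) = x m := by
    have hNM : N (m - 1) = M (m - 1) := by
      rw [← hN (m - 1) (by omega)]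
      refine Set.inter_eq_left.mpr fun i _ t ht htm => absurd htm (by omega)
    rw [hNM, ← hx (m - 1) (by omega), Nat.sub_add_cancel hm]
  have hdec : f (parentOn T (N 0) (x 0)) < f (x 0) := by
    have := hchain (m - 1) (by omega)
    simp only [d, hend] at this
    linarith
  obtain ⟨i, hi⟩ : (N 0).Nonempty := by
    rw [Set.nonempty_iff_ne_empty]
    rintro hN0
    rw [hN0, parentOn_empty] at hdec
    exact lt_irrefl _ hdec
  exact ⟨i, fun t ht => hi t (Nat.zero_le t) ht⟩

end Descent

/-- The inward steepest-descent phase performs at most `K = max_i |D_i|`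
cost-decreasing steps: if `x⁰, x¹, …, x^m` is a sequence such that each `x^{t+1}` is a
minimizer of `f` over `INWARD(x^t)` with `f(x^{t+1}) < f(x^t)`, then `m ≤ K`. -/
theorem inward_phase_at_most_K_steps {ι : Type*} [Fintype ι] {V : ι → Type*}
    [∀ i, Fintype (V i)] (T : ∀ i, RTree (V i)) (f : (∀ i, V i) → ℝ)
    (hf : StronglyTreeSubmodular T f) (m : ℕ) (x : ℕ → ∀ i, V i)
    (hstep : ∀ t < m, x (t + 1) ∈ inward T (x t) ∧
      (∀ y ∈ inward T (x t), f (x (t + 1)) ≤ f y) ∧ f (x (t + 1)) < f (x t)) :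
    m ≤ Finset.univ.sup fun i => Fintype.card (V i) := by
  rcases Nat.eq_zero_or_pos m with rfl | hm
  · exact Nat.zero_le _
  have hlast : f (x m) < f (x (m - 1)) := by
    simpa only [Nat.sub_add_cancel hm] using (hstep (m - 1) (by omega)).2.2
  obtain ⟨i, hi⟩ := hf.exists_forall_apply_succ_ne hm (fun t ht => (hstep t ht).1)
    (fun t ht => (hstep t ht).2.1) hlast
  have hdepth := (T i).depth_add_eq_of_parent_chain (a := fun t => x t i) fun t ht =>
    ⟨apply_eq_parent_of_mem_inward T (hstep t ht).1 (hi t ht), hi t ht⟩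
  calc m ≤ (T i).depth (x 0 i) := by omega
    _ ≤ Fintype.card (V i) := ((T i).depth_lt_card _).le
    _ ≤ Finset.univ.sup fun i => Fintype.card (V i) :=
      Finset.le_sup (f := fun i => Fintype.card (V i)) (Finset.mem_univ i)
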